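/- Let m ≥ 2 and let u = (u_{m−1}, …, u_1, u_0) be a path in Q (with u_0 applied first) such that for every 0 ≤ t ≤ m−2 the two-arrow factor u_{t+1}u_t is one of the reducible words q_i p_{i+1}, p_i q_{i−1}, s_i p_i, s_i q_i. Then there exists 0 ≤ i < n such that u equals one of the following four words (read left to right, rightmost arrow applied first): the length-m alternating word in p_{i+1}, q_i beginning with p_{i+1} (the type I ambiguity P^m_{i+1}); the length-m alternating word in q_i, p_{i+1} beginning with q_i (the type I ambiguity Q^m_i); s_{i+1} followed by the length-(m−1) alternating word beginning with p_{i+1} (the type II ambiguity sP^m_{i+1}); or s_i followed by the length-(m−1) alternating word beginning with q_i (the type II ambiguity sQ^m_i). Conversely, each of these four words has all of its two-arrow factors among the reducible words. Consequently, for every m ≥ 2 there are exactly 4n such paths of length m. -/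

import Mathlib

/-- The arrows of the KLRW quiver on vertices `{0, …, n}`:
`p i : i → i+1` and `q i : i+1 → i` (for `0 ≤ i < n`), and loops `s i : i → i`.
(Here `p i` stands for the paper's `p_{i+1}` and `q i` for `q_i`.) -/
inductive Arrow (n : ℕ) where
  | p (i : Fin n)
  | q (i : Fin n)
  | s (i : Fin (n + 1))
deriving DecidableEq

/-- `RedPair b a` holds when the two-letter word `b·a` (with `a` applied first) is one of
the reducible words `q_i p_{i+1}`, `p_i q_{i−1}`, `s_i p_i`, `s_i q_i` of the KLRW
reduction system.  Paths are written in word order (leftmost = last applied). -/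
inductive RedPair {n : ℕ} : Arrow n → Arrow n → Prop where
  | qp (i : Fin n) : RedPair (.q i) (.p i)
  | pq (i : Fin n) : RedPair (.p i) (.q i)
  | sp (i : Fin n) : RedPair (.s i.succ) (.p i)
  | sq (i : Fin n) : RedPair (.s i.castSucc) (.q i)

/-- `alt i true m` is the length-`m` word (in word order, leftmost first) alternating in
`p_{i+1}, q_i` and beginning with `p_{i+1}` (the type I ambiguity `P^m_{i+1}`);
`alt i false m` begins with `q_i` (the type I ambiguity `Q^m_i`). -/
def alt {n : ℕ} (i : Fin n) : Bool → ℕ → List (Arrow n)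
  | _, 0 => []
  | true, m + 1 => .p i :: alt i false m
  | false, m + 1 => .q i :: alt i true m

/-!
A reducible word ending in `p_{i+1}` (resp. `q_i`) must be `q_i p_{i+1}` or `s_{i+1} p_{i+1}`
(resp. `p_{i+1} q_i` or `s_i q_i`), and no reducible word ends in a loop `s_j`. Hence the two
rightmost arrows of such a path fix an index `i`, and each further arrow to the left continues the
alternation of `p_{i+1}` and `q_i`, except that the leftmost one may instead be a loop. This yields
the four families, and the `4n` words of a given length `m ≥ 2` are pairwise distinct.
-/

variable {n : ℕ}

lemma redPair_p_iff {a : Arrow n} {i : Fin n} : RedPair a (.p i) ↔ a = .q i ∨ a = .s i.succ := by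
  constructor
  · rintro (_ | _ | _ | _) <;> simp
  · rintro (rfl | rfl)
    exacts [.qp i, .sp i]

lemma redPair_q_iff {a : Arrow n} {i : Fin n} :
    RedPair a (.q i) ↔ a = .p i ∨ a = .s i.castSucc := by
  constructor
  · rintro (_ | _ | _ | _) <;> simp
  · rintro (rfl | rfl)
    exacts [.pq i, .sq i]

lemma not_redPair_s {a : Arrow n} {j : Fin (n + 1)} : ¬ RedPair a (.s j) := nofun

@[simp]
lemma length_alt (i : Fin n) (b : Bool) (m : ℕ) : (alt i b m).length = m := by
  induction m generalizing b with
  | zero => cases b <;> rfl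
  | succ m ih => cases b <;> simp [alt, ih]

lemma isChain_alt (i : Fin n) (b : Bool) (m : ℕ) : (alt i b m).IsChain RedPair := by
  induction m generalizing b with
  | zero => cases b <;> exact .nil
  | succ m ih =>
    rcases m with _ | m
    · cases b <;> exact .singleton _
    · cases b
      · exact List.isChain_cons_cons.2 ⟨.qp i, ih true⟩
      · exact List.isChain_cons_cons.2 ⟨.pq i, ih false⟩

lemma isChain_s_succ_cons_alt (i : Fin n) (m : ℕ) :
    (Arrow.s i.succ :: alt i true m).IsChain RedPair := by
  rcases m with _ | m
  · exact .singleton _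
  · exact List.isChain_cons_cons.2 ⟨.sp i, isChain_alt i true (m + 1)⟩

lemma isChain_s_castSucc_cons_alt (i : Fin n) (m : ℕ) :
    (Arrow.s i.castSucc :: alt i false m).IsChain RedPair := by
  rcases m with _ | m
  · exact .singleton _
  · exact List.isChain_cons_cons.2 ⟨.sq i, isChain_alt i false (m + 1)⟩

lemma exists_eq_alt_of_isChain {m : ℕ} (hm : 2 ≤ m) {u : List (Arrow n)} (hu : u.length = m)
    (hchain : u.IsChain RedPair) :
    ∃ i : Fin n,
      u = alt i true m ∨ u = alt i false m ∨
      u = Arrow.s i.succ :: alt i true (m - 1) ∨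
      u = Arrow.s i.castSucc :: alt i false (m - 1) := by
  induction m, hm using Nat.le_induction generalizing u with
  | base =>
    obtain ⟨a, b, rfl⟩ : ∃ a b, u = [a, b] := List.length_eq_two.1 hu
    rcases List.isChain_pair.1 hchain with i | i | i | i
    exacts [⟨i, .inr (.inl rfl)⟩, ⟨i, .inl rfl⟩, ⟨i, .inr (.inr (.inl rfl))⟩,
      ⟨i, .inr (.inr (.inr rfl))⟩]
  | succ m hm ih =>
    obtain ⟨a, t, rfl⟩ := List.exists_cons_of_length_eq_add_one hu
    obtain ⟨l, rfl⟩ : ∃ l, m = l + 1 := ⟨m - 1, by omega⟩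
    obtain ⟨i, rfl | rfl | rfl | rfl⟩ :=
      ih (Nat.succ_injective hu) (List.isChain_cons.1 hchain).2 <;>
      have hhead := (List.isChain_cons_cons.1 hchain).1
    · rcases redPair_p_iff.1 hhead with rfl | rfl
      exacts [⟨i, .inr (.inl rfl)⟩, ⟨i, .inr (.inr (.inl rfl))⟩]
    · rcases redPair_q_iff.1 hhead with rfl | rfl
      exacts [⟨i, .inl rfl⟩, ⟨i, .inr (.inr (.inr rfl))⟩]
    · exact (not_redPair_s hhead).elim
    · exact (not_redPair_s hhead).elim

/-- `ambiguity m (i, b, c)` is the type I ambiguity `alt i b m` if `c = false`, and the type II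
ambiguity, a loop followed by `alt i b (m - 1)`, if `c = true`. -/
def ambiguity (m : ℕ) : Fin n × Bool × Bool → List (Arrow n)
  | (i, b, false) => alt i b m
  | (i, true, true) => .s i.succ :: alt i true (m - 1)
  | (i, false, true) => .s i.castSucc :: alt i false (m - 1)

lemma ambiguity_injective {m : ℕ} (hm : 2 ≤ m) : (ambiguity (n := n) m).Injective := by
  obtain ⟨l, rfl⟩ : ∃ l, m = l + 2 := ⟨m - 2, by omega⟩
  rintro ⟨i, b, c⟩ ⟨j, b', c'⟩ h
  cases b <;> cases c <;> cases b' <;> cases c' <;>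
    simp_all [ambiguity, alt]

lemma setOf_isChain_eq_range_ambiguity {m : ℕ} (hm : 2 ≤ m) :
    {u : List (Arrow n) | u.length = m ∧ u.IsChain RedPair} = Set.range (ambiguity m) := by
  ext u
  constructor
  · rintro ⟨hu, hchain⟩
    obtain ⟨i, h | h | h | h⟩ := exists_eq_alt_of_isChain hm hu hchain
    exacts [⟨(i, true, false), h.symm⟩, ⟨(i, false, false), h.symm⟩,
      ⟨(i, true, true), h.symm⟩, ⟨(i, false, true), h.symm⟩]
  · rintro ⟨⟨i, b, c⟩, rfl⟩
    cases b <;> cases c <;>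
      simp only [ambiguity, Set.mem_ofPred_eq, List.length_cons, length_alt, isChain_alt,
        isChain_s_succ_cons_alt, isChain_s_castSucc_cons_alt, and_true] <;> omega

/-- Classification of ambiguities: for `m ≥ 2`, every length-`m` path all of whose
two-arrow factors are reducible words is, for some `i`, one of `P^m_{i+1}`, `Q^m_i`,
`sP^m_{i+1} = s_{i+1}·(alternating word of length m−1 beginning with p_{i+1})`, or
`sQ^m_i = s_i·(alternating word of length m−1 beginning with q_i)`; conversely each of
these four words has all two-arrow factors reducible; consequently there are exactly
`4n` such paths of length `m`. -/
theorem ambiguity_classification (n m : ℕ) (hm : 2 ≤ m) :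
    (∀ u : List (Arrow n), u.length = m → List.Chain' RedPair u →
      ∃ i : Fin n,
        u = alt i true m ∨ u = alt i false m ∨
        u = Arrow.s i.succ :: alt i true (m - 1) ∨
        u = Arrow.s i.castSucc :: alt i false (m - 1)) ∧
    (∀ i : Fin n,
        List.Chain' RedPair (alt i true m) ∧
        List.Chain' RedPair (alt i false m) ∧
        List.Chain' RedPair (Arrow.s i.succ :: alt i true (m - 1)) ∧
        List.Chain' RedPair (Arrow.s i.castSucc :: alt i false (m - 1))) ∧
    {u : List (Arrow n) | u.length = m ∧ List.Chain' RedPair u}.ncard = 4 * n := by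
  refine ⟨fun _ => exists_eq_alt_of_isChain hm,
    fun i => ⟨isChain_alt i true m, isChain_alt i false m, isChain_s_succ_cons_alt i (m - 1),
      isChain_s_castSucc_cons_alt i (m - 1)⟩, ?_⟩
  calc _ = (Set.range (ambiguity (n := n) m)).ncard :=
        congrArg Set.ncard (setOf_isChain_eq_range_ambiguity hm)
    _ = 4 * n := by
        rw [Set.ncard_range_of_injective (ambiguity_injective hm)]
        simp [mul_comm]
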